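/- arXiv:1606.07883 — 3 statements merged into one kernel-verified Lean document; each statement's English description precedes it below -/
import Mathlib

section
/- For every integer n ≥ 3, S(n, n−3) = C(n,4) · C(n−2,2), a product of two binomial coefficients. -/
open Finset Complex

/-- Stirling numbers of the second kind. -/
def S : ℕ → ℕ → ℕ
  | 0, 0 => 1
  | 0, _ + 1 => 0
  | _ + 1, 0 => 0
  | n + 1, k + 1 => (k + 1) * S n (k + 1) + S n k

/-- The Touchard (exponential) polynomial. -/
noncomputable def T (n : ℕ) (z : ℂ) : ℂ := ∑ k ∈ Finset.range (n + 1), (S n k : ℂ) * z ^ k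

/-! Induction along the diagonals `k = n - 1, n - 2, n - 3` of the recurrence: each diagonal's step
uses the formula on the previous one, and once binomial coefficients are written as falling
factorials over `ℚ` every step is a polynomial identity. -/

theorem S_eq_stirlingSecond : ∀ n k : ℕ, S n k = Nat.stirlingSecond n k
  | 0, 0 | 0, _ + 1 | _ + 1, 0 => rfl
  | n + 1, k + 1 => by
    rw [S, Nat.stirlingSecond_succ_succ, S_eq_stirlingSecond n (k + 1), S_eq_stirlingSecond n k]

namespace Nat

theorem stirlingSecond_add_two_self (n : ℕ) :
    stirlingSecond (n + 2) n = (n + 2).choose 3 + 3 * (n + 2).choose 4 := by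
  induction n with
  | zero => rfl
  | succ n ih =>
    rw [stirlingSecond_succ_succ, ih, stirlingSecond_succ_self_left]
    qify
    simp only [cast_choose_eq_descPochhammer_div ℚ, cast_add, cast_one, descPochhammer_succ_eval,
      descPochhammer_one, Polynomial.eval_X, add_sub_cancel_right, factorial, cast_ofNat]
    ring

theorem stirlingSecond_add_three_self (n : ℕ) :
    stirlingSecond (n + 3) n = (n + 3).choose 4 * (n + 1).choose 2 := by
  induction n with
  | zero => rfl
  | succ n ih =>
    rw [stirlingSecond_succ_succ, ih, stirlingSecond_add_two_self]
    qify
    simp only [cast_choose_eq_descPochhammer_div ℚ, cast_add, cast_one, descPochhammer_succ_eval,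
      descPochhammer_one, Polynomial.eval_X, add_sub_cancel_right, factorial, cast_ofNat]
    ring

end Nat

theorem stirling_n_sub_three (n : ℕ) (hn : 3 ≤ n) :
    S n (n - 3) = n.choose 4 * (n - 2).choose 2 := by
  obtain ⟨m, rfl⟩ := Nat.exists_eq_add_of_le' hn
  simpa [S_eq_stirlingSecond] using Nat.stirlingSecond_add_three_self m
end

section
/- Let ψ(t) = e^{t+iθ}/μ − log t with saddle point t₀ satisfying t₀ e^{t₀} = μ e^{−iθ}, and define Ψ_r = ψ^{(r)}(t₀)/ψ''(t₀). Then the steepest-descent coefficient c₂ = −(5Ψ₃² − 3Ψ₄)/(12 ψ''(t₀)) equals −P₂(t₀)/(12(1+t₀)³), where P₂(t) = 2t⁴ − 3t³ − 20t² − 18t + 2. -/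
open Finset Complex

/-! The saddle equation says exactly that `exp (t₀ + θ I) / μ = t₀⁻¹`, so every derivative
`ψ^{(r)}(t₀) = t₀⁻¹ + (-1)^r (r-1)! / t₀^r` is rational in `t₀`, and `c₂` reduces to an identity
of rational functions. -/

theorem iteratedDeriv_cexp_add_div (n : ℕ) (a b s : ℂ) :
    iteratedDeriv n (fun s => exp (s + a) / b) s = exp (s + a) / b := by
  rw [iteratedDeriv_div_const, iteratedDeriv_comp_add_const, iteratedDeriv_eq_iterate,
    iter_deriv_exp]

theorem iteratedDeriv_succ_cexp_add_div_sub_log {s : ℂ} (hs : s ∈ slitPlane) (n : ℕ) (a b : ℂ) :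
    iteratedDeriv (n + 1) (fun s => exp (s + a) / b - log s) s =
      exp (s + a) / b + (-1) ^ (n + 1) * n.factorial / s ^ (n + 1) := by
  have hexp : ContDiffAt ℂ (n + 1) (fun s => exp (s + a) / b) s := by fun_prop
  rw [iteratedDeriv_fun_sub hexp (contDiffAt_log hs), iteratedDeriv_cexp_add_div,
    iteratedDeriv_succ_log hs, zpow_sub₀ (slitPlane_ne_zero hs), zpow_neg, zpow_natCast, zpow_one]
  ring

theorem cexp_add_div_eq_inv_of_mul_cexp_eq {t a c : ℂ} (ht : t ≠ 0)
    (hsaddle : t * exp t = c * exp (-a)) : exp (t + a) / c = t⁻¹ := by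
  have hc : t * exp (t + a) = c := by
    rw [exp_add, ← mul_assoc, hsaddle, mul_assoc, ← exp_add, neg_add_cancel, exp_zero, mul_one]
  rw [← hc]
  field_simp

theorem steepest_descent_c2_general (μ θ : ℝ) (t₀ : ℂ)
    (ht : t₀ ∈ Complex.slitPlane)
    (hsaddle : t₀ * Complex.exp t₀ = μ * Complex.exp (-θ * Complex.I))
    (ψ : ℂ → ℂ) (hψ : ψ = fun s => Complex.exp (s + θ * Complex.I) / μ - Complex.log s)
    (Ψ : ℕ → ℂ) (hΨ : ∀ r : ℕ, Ψ r = iteratedDeriv r ψ t₀ / iteratedDeriv 2 ψ t₀) :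
    -(5 * (Ψ 3) ^ 2 - 3 * Ψ 4) / (12 * iteratedDeriv 2 ψ t₀) =
      -(2 * t₀ ^ 4 - 3 * t₀ ^ 3 - 20 * t₀ ^ 2 - 18 * t₀ + 2) / (12 * (1 + t₀) ^ 3) := by
  have ht0 : t₀ ≠ 0 := slitPlane_ne_zero ht
  have h1t : 1 + t₀ ≠ 0 := by
    intro h
    rw [eq_neg_of_add_eq_zero_right h] at ht
    norm_num [mem_slitPlane_iff] at ht
  have hE : exp (t₀ + θ * I) / μ = t₀⁻¹ :=
    cexp_add_div_eq_inv_of_mul_cexp_eq ht0 (by rwa [neg_mul] at hsaddle)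
  have hψ_succ (n : ℕ) :
      iteratedDeriv (n + 1) ψ t₀ = t₀⁻¹ + (-1) ^ (n + 1) * n.factorial / t₀ ^ (n + 1) := by
    rw [hψ, iteratedDeriv_succ_cexp_add_div_sub_log ht, hE]
  have h2 : iteratedDeriv 2 ψ t₀ = (1 + t₀) / t₀ ^ 2 := by
    rw [hψ_succ 1]; field_simp; norm_num; ring
  have h3 : iteratedDeriv 3 ψ t₀ = (t₀ ^ 2 - 2) / t₀ ^ 3 := by
    rw [hψ_succ 2]; field_simp; norm_num [Nat.factorial]; ring
  have h4 : iteratedDeriv 4 ψ t₀ = (t₀ ^ 3 + 6) / t₀ ^ 4 := by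
    rw [hψ_succ 3]; field_simp; norm_num [Nat.factorial]; ring
  rw [hΨ 3, hΨ 4, h2, h3, h4]
  field_simp
  ring

theorem steepest_descent_c2 (μ θ : ℝ) (hμ : 0 < μ) (t₀ : ℂ)
    (ht : t₀ ∈ Complex.slitPlane) (ht0 : t₀ ≠ 0) (htm1 : t₀ ≠ -1)
    (hsaddle : t₀ * Complex.exp t₀ = μ * Complex.exp (-θ * Complex.I))
    (ψ : ℂ → ℂ) (hψ : ψ = fun s => Complex.exp (s + θ * Complex.I) / μ - Complex.log s)
    (Ψ : ℕ → ℂ) (hΨ : ∀ r : ℕ, Ψ r = iteratedDeriv r ψ t₀ / iteratedDeriv 2 ψ t₀) :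
    -(5 * (Ψ 3) ^ 2 - 3 * Ψ 4) / (12 * iteratedDeriv 2 ψ t₀) =
      -(2 * t₀ ^ 4 - 3 * t₀ ^ 3 - 20 * t₀ ^ 2 - 18 * t₀ + 2) / (12 * (1 + t₀) ^ 3) :=
  steepest_descent_c2_general μ θ t₀ ht hsaddle ψ hψ Ψ hΨ
end

section
/- For μ > 0 and integer k, any solution t of t e^t = μ e^{−iθ} with Im(t) ∈ (2πk − θ − π, 2πk − θ + π) and t in the cut plane satisfies t + log t = log μ + (2πk − θ)i, where log is the principal branch. -/
open Finset Complex

/-!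
Exponentiating, both sides of the identity have exponential `t e^t = μ e^{-iθ}`, so they differ
by an integer multiple of `2πi`. Their imaginary parts are `Im t + arg t` and `2πk - θ`; since
`|Im t - (2πk - θ)| < π` by hypothesis and `|arg t| < π` on the slit plane, they differ by less
than `2π`, so the multiple is zero.
-/

namespace Complex

theorem eq_of_exp_eq_of_abs_im_sub_lt {a b : ℂ} (h : exp a = exp b)
    (him : |a.im - b.im| < 2 * Real.pi) : a = b := by
  obtain ⟨n, rfl⟩ := exp_eq_exp_iff_exists_int.mp h
  have hdiff : (b + n * (2 * Real.pi * I)).im - b.im = n * (2 * Real.pi) := by simp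
  rw [hdiff, abs_mul, abs_of_pos Real.two_pi_pos] at him
  have hn : |(n : ℝ)| < 1 := by nlinarith [Real.two_pi_pos]
  have hn0 : n = 0 := Int.abs_lt_one_iff.mp (by exact_mod_cast hn)
  simp [hn0]

theorem exp_add_log {t : ℂ} (ht : t ≠ 0) : exp (t + log t) = t * exp t := by
  rw [exp_add, exp_log ht, mul_comm]

theorem abs_arg_lt_pi_of_mem_slitPlane {z : ℂ} (hz : z ∈ slitPlane) : |z.arg| < Real.pi :=
  abs_lt.mpr ⟨neg_pi_lt_arg z, (arg_le_pi z).lt_of_ne (slitPlane_arg_ne_pi hz)⟩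

theorem exp_log_ofReal_add_mul_I {μ : ℝ} (hμ : 0 < μ) (θ : ℝ) (k : ℤ) :
    exp (Real.log μ + (2 * Real.pi * k - θ) * I) = μ * exp (-θ * I) := by
  have hshift : ((2 : ℂ) * Real.pi * k - θ) * I = -θ * I + k * (2 * Real.pi * I) := by ring
  rw [exp_add, ← ofReal_exp, Real.exp_log hμ, hshift, exp_add, exp_int_mul_two_pi_mul_I, mul_one]

end Complex

theorem saddle_log_form (μ θ : ℝ) (hμ : 0 < μ) (k : ℤ) (t : ℂ)
    (ht : t ∈ Complex.slitPlane)
    (heq : t * Complex.exp t = μ * Complex.exp (-θ * Complex.I))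
    (him : 2 * Real.pi * k - θ - Real.pi < t.im ∧ t.im < 2 * Real.pi * k - θ + Real.pi) :
    t + Complex.log t = Real.log μ + (2 * Real.pi * k - θ) * Complex.I := by
  refine eq_of_exp_eq_of_abs_im_sub_lt ?_ ?_
  · rw [exp_add_log (slitPlane_ne_zero ht), heq, exp_log_ofReal_add_mul_I hμ]
  · have harg := abs_lt.mp (abs_arg_lt_pi_of_mem_slitPlane ht)
    have hIm : (t + log t).im - (Real.log μ + (2 * Real.pi * k - θ) * I).im
        = t.im + t.arg - (2 * Real.pi * k - θ) := by simp [log_im]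
    rw [hIm, abs_lt]
    constructor <;> linarith [him.1, him.2, harg.1, harg.2]
end
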